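/- For any signed forest (T,σ) with n vertices, r(T,σ) + 2α(T) = 2n. -/

import Mathlib

open SimpleGraph
open scoped Classical

noncomputable section

/-- The adjacency matrix of a signed graph `(G, σ)`. -/
def sAdj {V : Type*} [Fintype V] (G : SimpleGraph V) (σ : Sym2 V → ℝ) : Matrix V V ℝ :=
  fun i j => if G.Adj i j then σ s(i, j) else 0

/-- The rank of a signed graph. -/
def srank {V : Type*} [Fintype V] (G : SimpleGraph V) (σ : Sym2 V → ℝ) : ℕ :=
  (sAdj G σ).rank

/-- The independence number of a graph. -/
def indepNum {V : Type*} (G : SimpleGraph V) : ℕ :=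
  sSup {n | ∃ s : Finset V, (∀ a ∈ s, ∀ b ∈ s, ¬ G.Adj a b) ∧ s.card = n}

/-- The matching number of a graph. -/
def matchNum {V : Type*} (G : SimpleGraph V) : ℕ :=
  sSup {n | ∃ M : G.Subgraph, M.IsMatching ∧ M.edgeSet.ncard = n}

/-- The cyclomatic number `|E| - |V| + ω` of a graph (as a natural number;
the quantity is always nonnegative). -/
def cyclomatic {V : Type*} [Fintype V] (G : SimpleGraph V) : ℕ :=
  G.edgeSet.ncard + Nat.card G.ConnectedComponent - Fintype.card V

/-- Deleting a set of vertices from a graph: the induced subgraph on the complement. -/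
def vdel {V : Type*} (G : SimpleGraph V) (S : Set V) : SimpleGraph ↥(Sᶜ) :=
  G.induce Sᶜ

/-- Restriction of a sign function to a set of vertices. -/
def σres {V : Type*} (σ : Sym2 V → ℝ) (s : Set V) : Sym2 s → ℝ :=
  fun e => σ (e.map Subtype.val)

/-- A signed graph is lower-optimal if `r + 2α = 2n - 2c`. -/
def lowerOptimal {V : Type*} [Fintype V] (G : SimpleGraph V) (σ : Sym2 V → ℝ) : Prop :=
  srank G σ + 2 * _root_.indepNum G + 2 * cyclomatic G = 2 * Fintype.card V

/-! Induct on the number of vertices. Without edges the rank is `0` and `α = n`. Otherwise a forest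
has a pendant vertex `u` with neighbour `v`. In the adjacency matrix the `{u, v}` block is
nonsingular and, because row and column `u` are supported on `v`, its Schur complement is the
adjacency matrix of `T - u - v`; so deleting `u` and `v` lowers the rank by `2`. It lowers `α` by
exactly `1`, since a maximum independent set of `T - u - v` extends by `u`, and an independent set
of `T` contains at most one of `u`, `v`. -/

theorem Submodule.finrank_prod {K M N : Type*} [Field K] [AddCommGroup M] [AddCommGroup N]
    [Module K M] [Module K N] (p : Submodule K M) (q : Submodule K N)
    [FiniteDimensional K p] [FiniteDimensional K q] :
    Module.finrank K (p.prod q) = Module.finrank K p + Module.finrank K q := by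
  have hinj : Function.Injective (p.subtype.prodMap q.subtype) :=
    Prod.map_injective.mpr ⟨p.injective_subtype, q.injective_subtype⟩
  rw [← Module.finrank_prod, ← LinearMap.finrank_range_of_inj hinj, LinearMap.range_prodMap,
    Submodule.range_subtype, Submodule.range_subtype]

namespace Matrix

variable {K : Type*} [Field K]

theorem rank_fromBlocks_zero₁₂_zero₂₁ {l m n o : Type*} [Fintype n] [Fintype o]
    (A : Matrix m n K) (D : Matrix l o K) :
    (fromBlocks A 0 0 D).rank = A.rank + D.rank := by
  have h : (fromBlocks A 0 0 D).mulVecLin =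
      (LinearEquiv.sumArrowLequivProdArrow m l K K).symm.toLinearMap ∘ₗ
        (A.mulVecLin.prodMap D.mulVecLin) ∘ₗ
        (LinearEquiv.sumArrowLequivProdArrow n o K K).toLinearMap := by
    refine LinearMap.ext fun x => funext fun i => ?_
    cases i <;> simp [fromBlocks_mulVec] <;> rfl
  rw [rank, h, LinearMap.range_comp, LinearMap.range_comp_of_range_eq_top _ (LinearEquiv.range _),
    LinearEquiv.finrank_map_eq, LinearMap.range_prodMap, Submodule.finrank_prod]
  rfl

theorem rank_fromBlocks_of_invertible₁₁ {l m n : Type*} [Fintype l] [Fintype m] [Fintype n]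
    [DecidableEq l] [DecidableEq m] [DecidableEq n]
    (A : Matrix m m K) (B : Matrix m n K) (C : Matrix l m K) (D : Matrix l n K) [Invertible A] :
    (fromBlocks A B C D).rank = A.rank + (D - C * ⅟A * B).rank := by
  rw [fromBlocks_eq_of_invertible₁₁, rank_mul_eq_left_of_isUnit_det,
    rank_mul_eq_right_of_isUnit_det, rank_fromBlocks_zero₁₂_zero₂₁] <;> simp

theorem rank_eq_rank_submatrix_compl_add_two {V : Type*} [Fintype V] (M : Matrix V V K) {u v : V}
    (huv : u ≠ v) (hrow : ∀ w, w ≠ v → M u w = 0) (hcol : ∀ w, w ≠ v → M w u = 0)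
    (hu : M u v ≠ 0) (hv : M v u ≠ 0) :
    M.rank = (M.submatrix (fun w : ↥(({u, v} : Set V)ᶜ) => (w : V))
      (fun w : ↥(({u, v} : Set V)ᶜ) => (w : V))).rank + 2 := by
  set S : Set V := {u, v}
  have hS (w : ↥Sᶜ) : (w : V) ≠ u ∧ (w : V) ≠ v := by
    simpa only [S, Set.mem_compl_iff, Set.mem_insert_iff, Set.mem_singleton_iff, not_or] using w.2
  let e : Fin 2 ⊕ ↥Sᶜ ≃ V := Equiv.ofBijective (Sum.elim ![u, v] Subtype.val) <| by
    refine ⟨Function.Injective.sumElim ?_ Subtype.val_injective ?_, fun w => ?_⟩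
    · intro i j h; fin_cases i <;> fin_cases j <;> simp_all [eq_comm]
    · intro i w; fin_cases i <;> simp [(hS w).1.symm, (hS w).2.symm]
    · by_cases hw : w ∈ S
      · rcases hw with rfl | rfl
        exacts [⟨Sum.inl 0, rfl⟩, ⟨Sum.inl 1, rfl⟩]
      · exact ⟨Sum.inr ⟨w, hw⟩, rfl⟩
  set A := (M.submatrix e e).toBlocks₁₁
  have hA : A = !![0, M u v; M v u, M v v] := by
    ext i j; fin_cases i <;> fin_cases j
    exacts [hrow u huv, rfl, rfl, rfl]
  have hdet : IsUnit A.det := by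
    rw [hA, det_fin_two_of, isUnit_iff_ne_zero]
    simpa using mul_ne_zero hu hv
  let := invertibleOfIsUnitDet A hdet
  -- the Schur complement `D - C A⁻¹ B` is just `D`: `C` vanishes on column `u`, `B` on row `u`,
  -- and `A⁻¹ v v = 0`
  have hinv : A⁻¹ 1 1 = 0 := by
    rw [inv_def, smul_apply, hA, adjugate_fin_two_of]; simp
  have hschur : (M.submatrix e e).toBlocks₂₁ * ⅟A * (M.submatrix e e).toBlocks₁₂ = 0 := by
    have he0 : e (Sum.inl 0) = u := rfl
    have he1 : e (Sum.inl 1) = v := rfl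
    have he (w : ↥Sᶜ) : e (Sum.inr w) = w := rfl
    ext i j
    simp [invOf_eq_nonsing_inv, mul_apply, Fin.sum_univ_two, hinv, toBlocks₂₁, toBlocks₁₂, he0,
      he1, he, hcol _ (hS i).2, hrow _ (hS j).2]
  rw [← rank_submatrix M e e, ← fromBlocks_toBlocks (M.submatrix e e),
    rank_fromBlocks_of_invertible₁₁, hschur, sub_zero,
    rank_of_isUnit A ((isUnit_iff_isUnit_det A).mpr hdet), Fintype.card_fin, add_comm]
  rfl

end Matrix

namespace SimpleGraph

variable {V : Type*}

theorem IsAcyclic.exists_adj_forall_adj_eq [Finite V] {G : SimpleGraph V} (hG : G.IsAcyclic)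
    {x y : V} (hxy : G.Adj x y) : ∃ u v, G.Adj u v ∧ ∀ w, G.Adj u w → w = v := by
  have : Nonempty V := ⟨x⟩
  obtain ⟨u, v, p, hp, hmax⟩ := Walk.exists_isPath_forall_isPath_length_le_length G
  have hnil : ¬p.Nil := by
    have := hmax x y (.cons hxy .nil) (by simp [hxy.ne])
    rw [Walk.not_nil_iff_lt_length]
    simpa [Nat.one_le_iff_ne_zero, pos_iff_ne_zero] using this
  refine ⟨u, p.snd, p.adj_snd hnil, fun w hadj => hG.eq_snd_of_adj_start hp hadj ?_⟩
  by_contra hw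
  simpa using hmax _ _ (.cons hadj.symm p) (hp.cons hw)

theorem indepNum_bot [Fintype V] : (⊥ : SimpleGraph V).indepNum = Fintype.card V := by
  obtain ⟨s, hs⟩ := (⊥ : SimpleGraph V).exists_isNIndepSet_indepNum
  refine le_antisymm (hs.card_eq ▸ s.card_le_univ) ?_
  simpa using (show (⊥ : SimpleGraph V).IsIndepSet (Finset.univ : Finset V) by
    simp [IsIndepSet, Set.Pairwise]).card_le_indepNum

theorem indepNum_eq_indepNum_induce_add_one [Finite V] {G : SimpleGraph V} {u v : V}
    (huv : G.Adj u v) (hleaf : ∀ w, G.Adj u w → w = v) :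
    G.indepNum = (G.induce ({u, v} : Set V)ᶜ).indepNum + 1 := by
  set S : Set V := {u, v}
  apply le_antisymm
  · obtain ⟨s, hs⟩ := G.exists_isNIndepSet_indepNum
    have ht : (G.induce Sᶜ).IsIndepSet (s.subtype (· ∈ Sᶜ) : Set ↥Sᶜ) :=
      fun a ha b hb hab => hs.isIndepSet (Finset.mem_subtype.mp ha) (Finset.mem_subtype.mp hb)
        (Subtype.val_injective.ne hab)
    have hS : (s.filter (· ∈ S)).card ≤ 1 := Finset.card_le_one.mpr fun a ha b hb => by
      simp only [Finset.mem_filter, S, Set.mem_insert_iff, Set.mem_singleton_iff] at ha hb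
      by_contra hab
      rcases ha with ⟨ha, rfl | rfl⟩ <;> rcases hb with ⟨hb, rfl | rfl⟩
      exacts [hab rfl, hs.isIndepSet ha hb hab huv, hs.isIndepSet ha hb hab huv.symm, hab rfl]
    have hsplit := s.card_filter_add_card_filter_not (· ∈ S)
    have hcard := ht.card_le_indepNum
    rw [Finset.card_subtype] at hcard
    simp only [Set.mem_compl_iff] at hcard
    rw [← hs.card_eq]
    omega
  · obtain ⟨t, ht⟩ := (G.induce Sᶜ).exists_isNIndepSet_indepNum
    have hu : u ∉ t.map (Function.Embedding.subtype _) := by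
      simp [S]
    have hs : G.IsIndepSet (insert u (t.map (Function.Embedding.subtype _)) : Finset V) := by
      rw [Finset.coe_insert, Finset.coe_map, Function.Embedding.coe_subtype, IsIndepSet,
        Set.pairwise_insert, Subtype.val_injective.injOn.pairwise_image]
      refine ⟨ht.isIndepSet, fun b hb _ => ?_⟩
      obtain ⟨b, hb', rfl⟩ := hb
      have hbv : (b : V) ≠ v := fun h => b.2 (Or.inr h)
      exact ⟨fun h => hbv (hleaf b h), fun h => hbv (hleaf b h.symm)⟩
    rw [← ht.card_eq]
    simpa [Finset.card_insert_of_notMem hu] using hs.card_le_indepNum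

end SimpleGraph

theorem indepNum_eq_simpleGraph_indepNum {V : Type*} (G : SimpleGraph V) :
    _root_.indepNum G = G.indepNum :=
  congrArg sSup <| Set.ext fun _ => exists_congr fun _ => by
    rw [isNIndepSet_iff]
    exact and_congr ⟨fun h _ ha _ hb _ => h _ ha _ hb, fun h a ha b hb hab => h ha hb hab.ne hab⟩
      Iff.rfl

theorem sAdj_induce {V : Type*} [Fintype V] (G : SimpleGraph V) (σ : Sym2 V → ℝ) (s : Set V)
    [Fintype s] :
    sAdj (G.induce s) (σres σ s) =
      (sAdj G σ).submatrix (fun w : ↥s => (w : V)) (fun w : ↥s => (w : V)) := by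
  ext i j
  simp [sAdj, σres]

theorem σres_ne_zero_of_mem_edgeSet_induce {V : Type*} {G : SimpleGraph V} {σ : Sym2 V → ℝ}
    (hσ : ∀ e ∈ G.edgeSet, σ e ≠ 0) {s : Set V} {e : Sym2 s} (he : e ∈ (G.induce s).edgeSet) :
    σres σ s e ≠ 0 :=
  e.ind (fun _ _ he => hσ _ he) he

theorem srank_bot {V : Type*} [Fintype V] (σ : Sym2 V → ℝ) : srank ⊥ σ = 0 := by
  rw [srank, show sAdj ⊥ σ = 0 by ext; simp [sAdj], Matrix.rank_zero]

theorem srank_eq_srank_vdel_add_two {V : Type*} [Fintype V] {G : SimpleGraph V}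
    {σ : Sym2 V → ℝ} {u v : V} (huv : G.Adj u v) (hleaf : ∀ w, G.Adj u w → w = v)
    (hσ : σ s(u, v) ≠ 0) : srank G σ = srank (vdel G {u, v}) (σres σ {u, v}ᶜ) + 2 := by
  rw [srank, srank, vdel, sAdj_induce]
  refine Matrix.rank_eq_rank_submatrix_compl_add_two _ huv.ne (fun w hw => ?_) (fun w hw => ?_)
    (by simpa [sAdj, huv]) (by simpa [sAdj, huv.symm, Sym2.eq_swap])
  · have : ¬G.Adj u w := fun h => hw (hleaf w h)
    simp [sAdj, this]
  · have : ¬G.Adj w u := fun h => hw (hleaf w h.symm)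
    simp [sAdj, this]

theorem srank_add_two_indepNum_of_isAcyclic {V : Type*} [Fintype V] {T : SimpleGraph V}
    (hT : T.IsAcyclic) {σ : Sym2 V → ℝ} (hσ : ∀ e ∈ T.edgeSet, σ e ≠ 0) :
    srank T σ + 2 * T.indepNum = 2 * Fintype.card V := by
  induction hn : Fintype.card V using Nat.strong_induction_on generalizing V with
  | _ n ih =>
  rcases eq_or_ne T ⊥ with rfl | hne
  · simp [srank_bot, indepNum_bot, hn]
  obtain ⟨x, y, hxy⟩ := ne_bot_iff_exists_adj.mp hne
  obtain ⟨u, v, huv, hleaf⟩ := hT.exists_adj_forall_adj_eq hxy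
  have hcard : Fintype.card ↥(({u, v} : Set V)ᶜ) + 2 = n := by
    have hpair : Fintype.card ↥({u, v} : Set V) = 2 := by
      rw [← Nat.card_eq_fintype_card, Nat.card_coe_set_eq, Set.ncard_pair huv.ne]
    have := set_fintype_card_le_univ ({u, v} : Set V)
    rw [Fintype.card_compl_set]
    omega
  have hdel := ih _ (by omega) (hT.induce _) (σ := σres σ ({u, v} : Set V)ᶜ)
    (fun _ he => σres_ne_zero_of_mem_edgeSet_induce hσ he) rfl
  rw [srank_eq_srank_vdel_add_two huv hleaf (hσ _ huv), vdel,
    indepNum_eq_indepNum_induce_add_one huv hleaf]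
  omega

theorem srank_add_two_indepNum_forest {V : Type*} [Fintype V] (T : SimpleGraph V)
    (hT : T.IsAcyclic) (σ : Sym2 V → ℝ)
    (hσ : ∀ e ∈ T.edgeSet, σ e = 1 ∨ σ e = -1) :
    srank T σ + 2 * _root_.indepNum T = 2 * Fintype.card V := by
  rw [indepNum_eq_simpleGraph_indepNum]
  exact srank_add_two_indepNum_of_isAcyclic hT fun e he => by
    rcases hσ e he with h | h <;> simp [h]
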